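/- arXiv:cs/0101003 — 7 statements merged into one kernel-verified Lean document; each statement's English description precedes it below -/
import Mathlib

section
/- Consider the square waveguide mesh on ℤ². Let d : Fin 4 → ℤ² be the four unit directions d 0 = (1,0), d 1 = (−1,0), d 2 = (0,1), d 3 = (0,−1), and let op : Fin 4 → Fin 4 swap 0↔1 and 2↔3. Suppose p, q : ℤ² → Fin 4 → ℤ → ℝ (incoming and outgoing wave signals at each junction, branch, and time step) satisfy: (scattering) q x k n = (1/2)·∑_{j} p x j n − p x k n for all x, k, n; and (propagation with unit delay) p x k (n+1) = q (x + d k) (op k) n for all x, k, n. Define the junction signal s x n = (1/2)·∑_{k} p x k n. Then s satisfies the finite difference equation s x (n+1) + s x (n−1) = (1/2)·∑_{k} s (x + d k) n for all x ∈ ℤ² and all n ∈ ℤ. -/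
/-!
The scattering rule `q = c ∑ p - p` with `c · N = 2` is lossless (`∑ q = ∑ p`), and because
`d (op k) = -d k` the wave arriving at `x + d k` on branch `op k` is the one that left `x` on
branch `k` a step earlier. Hence `s x (n - 1)` is `c` times the sum of the waves arriving at the
neighbours at time `n`, while `s x (n + 1)` is `c` times the sum of the waves those neighbours send
back, namely `s (x + d k) n` minus the arriving wave; adding the two leaves `c ∑ₖ s (x + d k) n`.
-/

open Finset

section WaveguideMesh

variable {G R ι : Type*} [AddCommGroup G]

theorem incoming_at_neighbor {d : ι → G} {op : ι → ι} {p q : G → ι → ℤ → R}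
    (hop : Function.Involutive op) (hd : ∀ k, d (op k) = -d k)
    (hprop : ∀ x k n, p x k (n + 1) = q (x + d k) (op k) n) (x : G) (k : ι) (n : ℤ) :
    p (x + d k) (op k) n = q x k (n - 1) := by
  have h := hprop (x + d k) (op k) (n - 1)
  rwa [sub_add_cancel, hop k, hd, add_neg_cancel_right] at h

variable [CommRing R] [Fintype ι]

theorem sum_scatter_eq_sum {c : R} (hc : c * Fintype.card ι = 2) (p q : ι → R)
    (hq : ∀ k, q k = c * ∑ j, p j - p k) : ∑ k, q k = ∑ k, p k := by
  simp only [hq, sum_sub_distrib, sum_const, card_univ, nsmul_eq_mul]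
  linear_combination (∑ j, p j) * hc

theorem junction_signal_wave_equation {d : ι → G} {op : ι → ι} {p q : G → ι → ℤ → R} {c : R}
    (hc : c * Fintype.card ι = 2) (hop : Function.Involutive op) (hd : ∀ k, d (op k) = -d k)
    (hscatter : ∀ x k n, q x k n = c * (∑ j, p x j n) - p x k n)
    (hprop : ∀ x k n, p x k (n + 1) = q (x + d k) (op k) n)
    {s : G → ℤ → R} (hs : ∀ x n, s x n = c * ∑ k, p x k n) (x : G) (n : ℤ) :
    s x (n + 1) + s x (n - 1) = c * ∑ k, s (x + d k) n := by
  have hprev : s x (n - 1) = c * ∑ k, p (x + d k) (op k) n := by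
    rw [hs, ← sum_scatter_eq_sum hc _ _ (fun k => hscatter x k (n - 1))]
    simp only [incoming_at_neighbor hop hd hprop]
  have hnext : s x (n + 1) = c * ∑ k, (s (x + d k) n - p (x + d k) (op k) n) := by
    rw [hs]
    congr 1
    refine sum_congr rfl fun k _ => ?_
    rw [hprop, hscatter, hs]
  rw [hnext, hprev, ← mul_add, ← sum_add_distrib]
  simp only [sub_add_cancel]

end WaveguideMesh

/-- The square waveguide mesh on `ℤ²`: with scattering
`q x k n = (1/2)·∑ⱼ p x j n − p x k n` at each 4-port junction and unit-delay
propagation `p x k (n+1) = q (x + d k) (op k) n` along the four unit directions,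
the junction signal `s x n = (1/2)·∑ₖ p x k n` satisfies the finite difference
equation `s x (n+1) + s x (n−1) = (1/2)·∑ₖ s (x + d k) n`. -/
theorem stmt1 (d : Fin 4 → ℤ × ℤ)
    (hd : d = ![(1, 0), (-1, 0), (0, 1), (0, -1)])
    (op : Fin 4 → Fin 4) (hop : op = ![1, 0, 3, 2])
    (p q : ℤ × ℤ → Fin 4 → ℤ → ℝ)
    (hscatter : ∀ x k n, q x k n = (1 / 2) * (∑ j, p x j n) - p x k n)
    (hprop : ∀ x k n, p x k (n + 1) = q (x + d k) (op k) n)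
    (s : ℤ × ℤ → ℤ → ℝ) (hs : ∀ x n, s x n = (1 / 2) * ∑ k, p x k n) :
    ∀ (x : ℤ × ℤ) (n : ℤ),
      s x (n + 1) + s x (n - 1) = (1 / 2) * ∑ k, s (x + d k) n := by
  subst hd hop
  exact junction_signal_wave_equation (by norm_num) (fun k => by fin_cases k <;> rfl)
    (fun k => by fin_cases k <;> rfl) hscatter hprop hs
end

section
/- Let D > 0, let ξ = (ξ_x, ξ_y) ∈ ℝ², let θ ∈ ℝ, and let v₁,…,v₆ ∈ ℝ² be the six vectors of length D in directions at angles kπ/3, k = 0,…,5 (i.e. ±D(1,0), ±D(1/2, √3/2), ±D(1/2, −√3/2)). Define the plane wave f : ℝ² → ℤ → ℂ by f x n = exp(i·(2π·⟨ξ, x⟩ − θ·n)). Then f satisfies the triangular-mesh difference equation f x (n+1) + f x (n−1) = (1/3)·∑_{k=1}^{6} f (x + v_k) n for all x ∈ ℝ² and n ∈ ℤ if and only if 2·cos θ = b_t(ξ_x, ξ_y), where b_t(ξ_x, ξ_y) = (2/3)·[cos(2πD·ξ_x) + cos(2πD·(ξ_x/2 + (√3/2)·ξ_y)) + cos(2πD·(ξ_x/2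 − (√3/2)·ξ_y))]. -/
/-!
The plane wave factors as `f x n = e^{2πi⟨ξ,x⟩} · e^{-iθn}`, so both sides of the difference
equation are `f x n` times a constant: `2 cos θ` on the left, and on the right `1/3` times the sum
of the characters `e^{2πi⟨ξ,v_k⟩}` over the stencil. Since `f x n ≠ 0` the equation holds iff the
two constants agree, and as the stencil is symmetric (`v` and `-v` occur together) the character
sum pairs off into twice a sum of three cosines.
-/

open Real

noncomputable section

def planeWave (ξ : ℝ × ℝ) (θ : ℝ) (x : ℝ × ℝ) (n : ℤ) : ℂ :=
  Complex.exp (Complex.I *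
    ((2 * (π : ℂ) * ((ξ.1 : ℂ) * (x.1 : ℂ) + (ξ.2 : ℂ) * (x.2 : ℂ))) - (θ : ℂ) * (n : ℂ)))

def planeWaveCharacter (ξ w : ℝ × ℝ) : ℂ :=
  Complex.exp (Complex.I * ((2 * π * (ξ.1 * w.1 + ξ.2 * w.2) : ℝ) : ℂ))

namespace planeWave

variable (ξ : ℝ × ℝ) (θ : ℝ)

theorem ne_zero (x : ℝ × ℝ) (n : ℤ) : planeWave ξ θ x n ≠ 0 :=
  Complex.exp_ne_zero _

theorem add_one_add_sub_one (x : ℝ × ℝ) (n : ℤ) :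
    planeWave ξ θ x (n + 1) + planeWave ξ θ x (n - 1) = planeWave ξ θ x n * (2 * Real.cos θ) := by
  rw [add_comm, Complex.ofReal_cos, Complex.two_cos, mul_add]
  simp only [planeWave, ← Complex.exp_add]
  congr 1 <;> congr 1 <;> push_cast <;> ring

theorem translate (x w : ℝ × ℝ) (n : ℤ) :
    planeWave ξ θ (x + w) n = planeWave ξ θ x n * planeWaveCharacter ξ w := by
  simp only [planeWave, planeWaveCharacter, ← Complex.exp_add, Prod.fst_add, Prod.snd_add]
  congr 1
  push_cast
  ring

theorem stencil_iff {ι : Type*} [Fintype ι] (v : ι → ℝ × ℝ) (c : ℂ) :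
    (∀ x n, planeWave ξ θ x (n + 1) + planeWave ξ θ x (n - 1) =
        c * ∑ k, planeWave ξ θ (x + v k) n) ↔
      2 * (Real.cos θ : ℂ) = c * ∑ k, planeWaveCharacter ξ (v k) := by
  have hrhs : ∀ x n, c * ∑ k, planeWave ξ θ (x + v k) n =
      planeWave ξ θ x n * (c * ∑ k, planeWaveCharacter ξ (v k)) := by
    intro x n
    simp only [translate, ← Finset.mul_sum]
    ring
  simp only [add_one_add_sub_one, hrhs, mul_right_inj' (ne_zero ξ θ _ _), forall_const]

end planeWave

theorem planeWaveCharacter_add_neg (ξ w : ℝ × ℝ) :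
    planeWaveCharacter ξ w + planeWaveCharacter ξ (-w) =
      2 * (Real.cos (2 * π * (ξ.1 * w.1 + ξ.2 * w.2)) : ℂ) := by
  rw [Complex.ofReal_cos, Complex.two_cos]
  simp only [planeWaveCharacter, Prod.fst_neg, Prod.snd_neg]
  congr 1 <;> congr 1 <;> push_cast <;> ring

theorem planeWaveCharacter_sum_pairs (ξ a b c : ℝ × ℝ) :
    ∑ k, planeWaveCharacter ξ (![a, -a, b, -b, c, -c] k) =
      2 * (Real.cos (2 * π * (ξ.1 * a.1 + ξ.2 * a.2)) : ℂ) +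
        2 * (Real.cos (2 * π * (ξ.1 * b.1 + ξ.2 * b.2)) : ℂ) +
          2 * (Real.cos (2 * π * (ξ.1 * c.1 + ξ.2 * c.2)) : ℂ) := by
  rw [Fin.sum_univ_six, ← planeWaveCharacter_add_neg, ← planeWaveCharacter_add_neg,
    ← planeWaveCharacter_add_neg]
  simp only [Matrix.cons_val]
  ring

end

theorem stmt3_general (D ξx ξy θ : ℝ)
    (v : Fin 6 → ℝ × ℝ)
    (hv : v = ![(D, 0), (-D, 0), (D / 2, Real.sqrt 3 / 2 * D),
      (-(D / 2), -(Real.sqrt 3 / 2 * D)), (D / 2, -(Real.sqrt 3 / 2 * D)),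
      (-(D / 2), Real.sqrt 3 / 2 * D)])
    (f : ℝ × ℝ → ℤ → ℂ)
    (hf : ∀ x n, f x n = Complex.exp (Complex.I *
      ((2 * (π : ℂ) * ((ξx : ℂ) * (x.1 : ℂ) + (ξy : ℂ) * (x.2 : ℂ))) - (θ : ℂ) * (n : ℂ)))) :
    (∀ (x : ℝ × ℝ) (n : ℤ), f x (n + 1) + f x (n - 1) = (1 / 3) * ∑ k, f (x + v k) n) ↔
    2 * Real.cos θ = (2 / 3) * (Real.cos (2 * π * D * ξx) +
      Real.cos (2 * π * D * (ξx / 2 + Real.sqrt 3 / 2 * ξy)) +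
      Real.cos (2 * π * D * (ξx / 2 - Real.sqrt 3 / 2 * ξy))) := by
  have hv_pairs : v = ![(D, 0), -(D, 0), (D / 2, √3 / 2 * D), -(D / 2, √3 / 2 * D),
      (D / 2, -(√3 / 2 * D)), -(D / 2, -(√3 / 2 * D))] := by
    simp only [hv, Prod.neg_mk, neg_zero, neg_neg]
  obtain rfl : f = planeWave (ξx, ξy) θ := funext₂ hf
  rw [hv_pairs, planeWave.stencil_iff, planeWaveCharacter_sum_pairs, ← Complex.ofReal_inj,
    show 2 * π * (ξx * D + ξy * 0) = 2 * π * D * ξx by ring,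
    show 2 * π * (ξx * (D / 2) + ξy * (√3 / 2 * D)) = 2 * π * D * (ξx / 2 + √3 / 2 * ξy) by ring,
    show 2 * π * (ξx * (D / 2) + ξy * -(√3 / 2 * D)) = 2 * π * D * (ξx / 2 - √3 / 2 * ξy) by ring]
  push_cast
  constructor <;> intro h <;> linear_combination h

/-- The plane wave `f x n = exp(i·(2π·⟨ξ, x⟩ − θ·n))` satisfies the triangular-mesh
difference equation `f x (n+1) + f x (n−1) = (1/3)·∑_{k=1}^{6} f (x + vₖ) n`, where
`v₁,…,v₆` are the six vectors of length `D` at angles `kπ/3`, iff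
`2·cos θ = b_t(ξ_x, ξ_y)`, the geometric factor of the triangular mesh. -/
theorem stmt3 (D ξx ξy θ : ℝ) (hD : 0 < D)
    (v : Fin 6 → ℝ × ℝ)
    (hv : v = ![(D, 0), (-D, 0), (D / 2, Real.sqrt 3 / 2 * D),
      (-(D / 2), -(Real.sqrt 3 / 2 * D)), (D / 2, -(Real.sqrt 3 / 2 * D)),
      (-(D / 2), Real.sqrt 3 / 2 * D)])
    (f : ℝ × ℝ → ℤ → ℂ)
    (hf : ∀ x n, f x n = Complex.exp (Complex.I *
      ((2 * (π : ℂ) * ((ξx : ℂ) * (x.1 : ℂ) + (ξy : ℂ) * (x.2 : ℂ))) - (θ : ℂ) * (n : ℂ)))) :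
    (∀ (x : ℝ × ℝ) (n : ℤ), f x (n + 1) + f x (n - 1) = (1 / 3) * ∑ k, f (x + v k) n) ↔
    2 * Real.cos θ = (2 / 3) * (Real.cos (2 * π * D * ξx) +
      Real.cos (2 * π * D * (ξx / 2 + Real.sqrt 3 / 2 * ξy)) +
      Real.cos (2 * π * D * (ξx / 2 - Real.sqrt 3 / 2 * ξy))) :=
  stmt3_general D ξx ξy θ v hv f hf
end

section
/- Let D > 0 and define the dispersion ratio of the square waveguide mesh by k_s(ξ_x, ξ_y) = (1/(2πD·√(ξ_x² + ξ_y²)))·arctan(√(4 − b_s(ξ_x,ξ_y)²)/b_s(ξ_x,ξ_y)), where b_s(ξ_x, ξ_y) = cos(2πD·ξ_x) + cos(2πD·ξ_y). Then for every ξ₀ with 0 < ξ₀ < 1/(4D), one has k_s(ξ₀, ξ₀) = 1/√2 exactly; that is, the square mesh introduces no dispersion error along the diagonal direction ξ_x = ξ_y. -/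
/-!
Along the diagonal, `b_s = 2 cos θ` with `θ = 2πDξ₀ ∈ (0, π/2)`, so `√(4 - b_s²) = 2 sin θ` and the
arctangent returns exactly `θ`; since `|(ξ₀, ξ₀)| = √2 ξ₀`, the ratio is `θ / (√2 θ)`.
-/

open Real

theorem sqrt_four_sub_sq_two_mul_cos {θ : ℝ} (hθ : 0 ≤ sin θ) :
    √(4 - (2 * cos θ) ^ 2) = 2 * sin θ := by
  have hsq : 4 - (2 * cos θ) ^ 2 = (2 * sin θ) ^ 2 := by
    nlinarith [sin_sq_add_cos_sq θ]
  rw [hsq, sqrt_sq (by positivity)]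

theorem arctan_sqrt_four_sub_sq_div_two_mul_cos {θ : ℝ} (h₀ : 0 ≤ θ) (hπ : θ < π / 2) :
    arctan (√(4 - (2 * cos θ) ^ 2) / (2 * cos θ)) = θ := by
  have hsin : 0 ≤ sin θ := sin_nonneg_of_nonneg_of_le_pi h₀ (by linarith [pi_pos])
  rw [sqrt_four_sub_sq_two_mul_cos hsin, mul_div_mul_left _ _ two_ne_zero, ← tan_eq_sin_div_cos,
    arctan_tan (by linarith [pi_pos]) hπ]

theorem sqrt_sq_add_sq_self {x : ℝ} (hx : 0 ≤ x) : √(x ^ 2 + x ^ 2) = x * √2 := by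
  rw [← two_mul, sqrt_mul zero_le_two, sqrt_sq hx, mul_comm]

theorem two_pi_mul_lt_pi_div_two {D ξ : ℝ} (hD : 0 < D) (hξ : ξ < 1 / (4 * D)) :
    2 * π * D * ξ < π / 2 := by
  have h4Dξ : 4 * D * ξ < 1 := by
    rwa [lt_div_iff₀ (by positivity), mul_comm] at hξ
  nlinarith [pi_pos]

/-- The dispersion ratio of the square waveguide mesh is exactly `1/√2` along the
diagonal direction `ξ_x = ξ_y` (below the Nyquist limit): the square mesh introduces
no dispersion error along the diagonal. -/
theorem stmt5 (D : ℝ) (hD : 0 < D)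
    (b : ℝ → ℝ → ℝ)
    (hb : ∀ ξx ξy, b ξx ξy = Real.cos (2 * π * D * ξx) + Real.cos (2 * π * D * ξy))
    (k : ℝ → ℝ → ℝ)
    (hk : ∀ ξx ξy, k ξx ξy = (1 / (2 * π * D * Real.sqrt (ξx ^ 2 + ξy ^ 2))) *
      Real.arctan (Real.sqrt (4 - (b ξx ξy) ^ 2) / b ξx ξy)) :
    ∀ ξ₀ : ℝ, 0 < ξ₀ → ξ₀ < 1 / (4 * D) → k ξ₀ ξ₀ = 1 / Real.sqrt 2 := by
  intro ξ₀ hξ₀ hξ₀_lt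
  have hθ : 0 < 2 * π * D * ξ₀ := by positivity
  rw [hk, hb, ← two_mul (cos _), arctan_sqrt_four_sub_sq_div_two_mul_cos hθ.le
    (two_pi_mul_lt_pi_div_two hD hξ₀_lt), sqrt_sq_add_sq_self hξ₀.le]
  field_simp
end

section
/- Let D > 0 and let (u, v) ∈ ℝ² with u² + v² = 1. Define b_s(ξ_x, ξ_y) = cos(2πD·ξ_x) + cos(2πD·ξ_y). Then the dispersion ratio of the square waveguide mesh along the direction (u, v) tends to 1/√2 at dc: the function t ↦ (1/(2πD·t))·arctan(√(4 − b_s(t·u, t·v)²)/b_s(t·u, t·v)) tends to 1/√2 as t → 0⁺. -/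
open Real Filter Topology

/-! With `a = 2πD` and `B t = b (t u) (t v)`, the defect `2 - B t = (1 - cos (a u t)) + (1 - cos (a v t))`
is `a² t² (u² + v²) / 2 + o(t²) = a² t² / 2 + o(t²)`. Hence `√(4 - B²) = √((2 - B)(2 + B)) ∼ √2 · a t`
while `B → 2`, so the argument of `arctan` is `∼ a t / √2 → 0`, and `arctan x ∼ x` gives the
limit `1 / √2`. -/

theorem one_sub_cos_eq_sq_mul_sinc_sq (x : ℝ) : 1 - cos x = x ^ 2 / 2 * sinc (x / 2) ^ 2 := by
  rcases eq_or_ne x 0 with rfl | hx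
  · simp
  · rw [sinc_of_ne_zero (by positivity), div_pow, sin_sq_eq_half_sub, mul_div_cancel₀ x two_ne_zero]
    field_simp

theorem tendsto_one_sub_cos_mul_div_sq (c : ℝ) :
    Tendsto (fun t => (1 - cos (c * t)) / t ^ 2) (𝓝[≠] 0) (𝓝 (c ^ 2 / 2)) := by
  have hsinc : Tendsto (fun t => c ^ 2 / 2 * sinc (c * t / 2) ^ 2) (𝓝 0) (𝓝 (c ^ 2 / 2)) := by
    simpa using ((continuous_sinc.comp (by fun_prop : Continuous fun t : ℝ => c * t / 2)).pow 2
      |>.const_mul (c ^ 2 / 2)).tendsto 0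
  refine (hsinc.mono_left nhdsWithin_le_nhds).congr' ?_
  filter_upwards [self_mem_nhdsWithin] with t ht
  rw [one_sub_cos_eq_sq_mul_sinc_sq]
  field_simp [show t ≠ 0 from ht]

theorem HasDerivAt.tendsto_comp_div {f g : ℝ → ℝ} {f' L : ℝ} {l : Filter ℝ}
    (hf : HasDerivAt f f' 0) (hf0 : f 0 = 0) (hg : Tendsto g l (𝓝 0))
    (hgL : Tendsto (fun t => g t / t) l (𝓝 L)) :
    Tendsto (fun t => f (g t) / t) l (𝓝 (L * f')) := by
  -- `f (g t) = g t * dslope f 0 (g t)` holds even where `g t = 0`, so no `g t ≠ 0` is needed.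
  have hslope : Tendsto (fun t => dslope f 0 (g t)) l (𝓝 f') := by
    rw [← hf.deriv, ← dslope_same]
    exact (continuousAt_dslope_same.2 hf.differentiableAt).tendsto.comp hg
  refine (hgL.mul hslope).congr fun t => ?_
  have := sub_smul_dslope f 0 (g t)
  rw [sub_zero, hf0, sub_zero, smul_eq_mul] at this
  rw [← this]
  ring

theorem tendsto_arctan_sqrt_four_sub_sq_div_div_of_tendsto {B : ℝ → ℝ} {c : ℝ}
    (hB : Tendsto (fun t => (2 - B t) / t ^ 2) (𝓝[>] 0) (𝓝 c)) :
    Tendsto (fun t => arctan (√(4 - B t ^ 2) / B t) / t) (𝓝[>] 0) (𝓝 √c) := by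
  have ht : Tendsto (fun t : ℝ => t) (𝓝[>] 0) (𝓝 0) := nhdsWithin_le_nhds
  have hB2 : Tendsto B (𝓝[>] 0) (𝓝 2) := by
    have := tendsto_const_nhds (x := (2 : ℝ)).sub ((ht.pow 2).mul hB)
    rw [zero_pow two_ne_zero, zero_mul, sub_zero] at this
    refine this.congr' ?_
    filter_upwards [self_mem_nhdsWithin] with t (ht : 0 < t)
    field_simp
    ring
  have hslope : Tendsto (fun t => √(4 - B t ^ 2) / B t / t) (𝓝[>] 0) (𝓝 √c) := by
    have := ((hB.mul ((tendsto_const_nhds (x := (2 : ℝ))).add hB2)).sqrt).div hB2 two_ne_zero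
    rw [show √(c * (2 + 2)) / 2 = √c by
      rw [sqrt_mul' c (by norm_num), show (2 + 2 : ℝ) = 2 ^ 2 by norm_num, sqrt_sq two_pos.le]
      ring] at this
    refine this.congr' ?_
    filter_upwards [self_mem_nhdsWithin] with t (ht : 0 < t)
    rw [Pi.div_apply, div_mul_eq_mul_div, show (2 - B t) * (2 + B t) = 4 - B t ^ 2 by ring,
      sqrt_div' _ (by positivity), sqrt_sq ht.le]
    ring
  have hzero : Tendsto (fun t => √(4 - B t ^ 2) / B t) (𝓝[>] 0) (𝓝 0) := by
    refine (mul_zero √c ▸ hslope.mul ht).congr' ?_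
    filter_upwards [self_mem_nhdsWithin] with t (ht : 0 < t)
    field_simp
  simpa using (hasDerivAt_arctan 0).tendsto_comp_div arctan_zero hzero hslope

/-- The dispersion ratio of the square waveguide mesh along any unit direction `(u, v)`
tends to `1/√2` at dc. -/
theorem stmt6 (D u v : ℝ) (hD : 0 < D) (huv : u ^ 2 + v ^ 2 = 1)
    (b : ℝ → ℝ → ℝ)
    (hb : ∀ ξx ξy, b ξx ξy = Real.cos (2 * π * D * ξx) + Real.cos (2 * π * D * ξy)) :
    Filter.Tendsto (fun t : ℝ => (1 / (2 * π * D * t)) *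
        Real.arctan (Real.sqrt (4 - (b (t * u) (t * v)) ^ 2) / b (t * u) (t * v)))
      (nhdsWithin 0 (Set.Ioi 0)) (nhds (1 / Real.sqrt 2)) := by
  set a := 2 * π * D
  have ha : 0 < a := by positivity
  have hdefect : Tendsto (fun t => (2 - b (t * u) (t * v)) / t ^ 2) (𝓝[>] 0) (𝓝 (a ^ 2 / 2)) := by
    have := ((tendsto_one_sub_cos_mul_div_sq (a * u)).add
      (tendsto_one_sub_cos_mul_div_sq (a * v))).mono_left (nhdsGT_le_nhdsNE 0)
    rw [show (a * u) ^ 2 / 2 + (a * v) ^ 2 / 2 = a ^ 2 / 2 by linear_combination a ^ 2 / 2 * huv]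
      at this
    refine this.congr fun t => ?_
    rw [hb, mul_comm t u, mul_comm t v, ← mul_assoc, ← mul_assoc]
    ring
  have := (tendsto_arctan_sqrt_four_sub_sq_div_div_of_tendsto hdefect).const_mul a⁻¹
  rw [sqrt_div' _ zero_le_two, sqrt_sq ha.le, show a⁻¹ * (a / √2) = 1 / √2 by field_simp] at this
  refine this.congr fun t => ?_
  ring
end

section
/- Let D > 0 and B > 0, and let L_t* be the set of all integer linear combinations of (1/D, −1/(√3·D)) and (0, 2/(√3·D)) in ℝ². The open Euclidean balls of radius B centered at the points of L_t* are pairwise disjoint if and only if D ≤ 1/(√3·B). In particular, a signal with circular spatial band of radius B is sampled without aliasing by the triangular waveguide mesh exactly when its waveguide length satisfies D ≤ 1/(√3·B), with critical length D_t = 1/(√3·B). -/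
/-!
The squared distance between two points of `L_t*` is `4/(3D²)` times the Eisenstein norm
`k² - kl + l²` of their coordinate difference `(k, l) ∈ ℤ²`, and `4(k² - kl + l²) = (2k - l)² + 3l²`
shows that this norm is at least `1` unless `k = l = 0`. So the minimal distance between distinct
points of `L_t*` is `2/(√3·D)`, attained by `0` and the first basis vector, and balls of radius `B`
around them are disjoint exactly when `2B` does not exceed it.
-/

open Metric

theorem Int.one_le_sq_sub_mul_add_sq {k l : ℤ} (h : (k, l) ≠ 0) : 1 ≤ k ^ 2 - k * l + l ^ 2 := by
  rcases eq_or_ne l 0 with rfl | hl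
  · have hk : k ≠ 0 := fun hk => h (by simp [hk])
    nlinarith [sq_pos_of_ne_zero hk]
  · nlinarith [sq_nonneg (2 * k - l), sq_pos_of_ne_zero hl]

theorem Set.pairwise_disjoint_ball_iff {E : Type*} [SeminormedAddCommGroup E] [NormedSpace ℝ E]
    {S : Set E} {r : ℝ} (hr : 0 < r) :
    S.Pairwise (fun p q => Disjoint (ball p r) (ball q r)) ↔
      ∀ p ∈ S, ∀ q ∈ S, p ≠ q → 2 * r ≤ dist p q := by
  simp only [Set.Pairwise, disjoint_ball_ball_iff hr hr, two_mul]

noncomputable section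

def triReciprocalPoint (D : ℝ) (m n : ℤ) : EuclideanSpace ℝ (Fin 2) :=
  (m : ℝ) • (WithLp.equiv 2 (Fin 2 → ℝ)).symm ![1 / D, -(1 / (Real.sqrt 3 * D))] +
    (n : ℝ) • (WithLp.equiv 2 (Fin 2 → ℝ)).symm ![0, 2 / (Real.sqrt 3 * D)]

theorem triReciprocalPoint_sub (D : ℝ) (m n m' n' : ℤ) :
    triReciprocalPoint D m n - triReciprocalPoint D m' n' =
      triReciprocalPoint D (m - m') (n - n') := by
  simp only [triReciprocalPoint, Int.cast_sub, sub_smul]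
  abel

theorem norm_triReciprocalPoint {D : ℝ} (hD : 0 < D) (k l : ℤ) :
    ‖triReciprocalPoint D k l‖ =
      2 / (Real.sqrt 3 * D) * Real.sqrt ((k ^ 2 - k * l + l ^ 2 : ℤ) : ℝ) := by
  have hsqrt3 : Real.sqrt 3 ^ 2 = 3 := Real.sq_sqrt (by norm_num)
  have hsum : ∑ i, ‖triReciprocalPoint D k l i‖ ^ 2 =
      (2 / (Real.sqrt 3 * D)) ^ 2 * ((k ^ 2 - k * l + l ^ 2 : ℤ) : ℝ) := by
    simp only [triReciprocalPoint, Fin.sum_univ_two, WithLp.equiv_symm_apply, PiLp.add_apply,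
      PiLp.smul_apply, Matrix.cons_val_zero, Matrix.cons_val_one, smul_eq_mul,
      Real.norm_eq_abs, sq_abs]
    push_cast
    field_simp
    rw [hsqrt3]
    ring
  rw [EuclideanSpace.norm_eq, hsum, Real.sqrt_mul (sq_nonneg _), Real.sqrt_sq (by positivity)]

theorem dist_triReciprocalPoint {D : ℝ} (hD : 0 < D) (m n m' n' : ℤ) :
    dist (triReciprocalPoint D m n) (triReciprocalPoint D m' n') =
      2 / (Real.sqrt 3 * D) *
        Real.sqrt (((m - m') ^ 2 - (m - m') * (n - n') + (n - n') ^ 2 : ℤ) : ℝ) := by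
  rw [dist_eq_norm, triReciprocalPoint_sub, norm_triReciprocalPoint hD]

theorem two_div_le_dist_triReciprocalPoint {D : ℝ} (hD : 0 < D) {m n m' n' : ℤ}
    (h : (m, n) ≠ (m', n')) :
    2 / (Real.sqrt 3 * D) ≤ dist (triReciprocalPoint D m n) (triReciprocalPoint D m' n') := by
  have hdiff : (m - m', n - n') ≠ 0 := by simpa [sub_eq_zero] using h
  rw [dist_triReciprocalPoint hD]
  refine le_mul_of_one_le_right (by positivity) (Real.one_le_sqrt.mpr ?_)
  exact_mod_cast Int.one_le_sq_sub_mul_add_sq hdiff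

theorem dist_triReciprocalPoint_zero_one {D : ℝ} (hD : 0 < D) :
    dist (triReciprocalPoint D 0 0) (triReciprocalPoint D 1 0) = 2 / (Real.sqrt 3 * D) := by
  rw [dist_triReciprocalPoint hD]
  norm_num

end

/-- The open Euclidean balls of radius `B` centered at the points of the reciprocal
lattice `L_t*` of the triangular sampling lattice with waveguide length `D` (the ℤ-span
of `(1/D, −1/(√3·D))` and `(0, 2/(√3·D))`) are pairwise disjoint iff `D ≤ 1/(√3·B)`:
a circularly band-limited signal of radius `B` is sampled without aliasing by the
triangular waveguide mesh exactly when `D ≤ 1/(√3·B)`. -/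
theorem stmt11 (D B : ℝ) (hD : 0 < D) (hB : 0 < B)
    (L : Set (EuclideanSpace ℝ (Fin 2)))
    (hL : L = {p | ∃ m n : ℤ,
      p = (m : ℝ) • (WithLp.equiv 2 (Fin 2 → ℝ)).symm ![1 / D, -(1 / (Real.sqrt 3 * D))] +
          (n : ℝ) • (WithLp.equiv 2 (Fin 2 → ℝ)).symm ![0, 2 / (Real.sqrt 3 * D)]}) :
    L.Pairwise (fun p q => Disjoint (Metric.ball p B) (Metric.ball q B)) ↔
      D ≤ 1 / (Real.sqrt 3 * B) := by
  have hscale : 2 * B ≤ 2 / (Real.sqrt 3 * D) ↔ D ≤ 1 / (Real.sqrt 3 * B) := by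
    rw [le_div_iff₀ (by positivity), le_div_iff₀ (by positivity)]
    constructor <;> intro h <;> nlinarith
  replace hL : L = {p | ∃ m n : ℤ, p = triReciprocalPoint D m n} := hL
  rw [Set.pairwise_disjoint_ball_iff hB, ← hscale, hL]
  constructor
  · intro h
    have hdist := dist_triReciprocalPoint_zero_one hD
    have hne : triReciprocalPoint D 0 0 ≠ triReciprocalPoint D 1 0 := fun heq => by
      rw [heq, dist_self] at hdist
      exact (div_pos two_pos (by positivity)).ne hdist
    exact hdist ▸ h _ ⟨0, 0, rfl⟩ _ ⟨1, 0, rfl⟩ hne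
  · rintro h _ ⟨m, n, rfl⟩ _ ⟨m', n', rfl⟩ hne
    exact h.trans (two_div_le_dist_triReciprocalPoint hD fun heq => hne (by cases heq; rfl))
end

section
/- Let D > 0 and let R be the rotation of ℝ² by the angle π/6. Then R maps the ℤ-span of the vectors (√3·D, 0) and ((√3/2)·D, (3/2)·D) (the triangular lattice L_t(√3·D)) bijectively onto the ℤ-span of the vectors ((3/2)·D, (√3/2)·D) and (0, √3·D) (the lattice L_T(D)). Hence L_T(D) = L_t(√3·D) up to a rotation, so a hexagonal waveguide mesh with waveguide length D does not perform better (in aliasing-free bandwidth) than a triangular waveguide mesh whose waveguides are √3 times longer. -/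
open Real

/-! The rotation by `π/6` is an injective linear map sending `(√3·D, 0)` and `((√3/2)·D, (3/2)·D)`
to `((3/2)·D, (√3/2)·D)` and `(0, √3·D)`, and a linear map carries the `ℤ`-span of two vectors onto
the `ℤ`-span of their images. -/

def intLattice (K : Type*) {E : Type*} [Ring K] [AddCommGroup E] [Module K E] (u v : E) : Set E :=
  {p | ∃ m n : ℤ, p = (m : K) • u + (n : K) • v}

section IntLattice

variable {K E F : Type*} [Ring K] [AddCommGroup E] [Module K E] [AddCommGroup F] [Module K F]

theorem image_intLattice (f : E →ₗ[K] F) (u v : E) :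
    f '' intLattice K u v = intLattice K (f u) (f v) := by
  ext q
  constructor
  · rintro ⟨p, ⟨m, n, rfl⟩, rfl⟩
    exact ⟨m, n, by simp only [map_add, map_smul]⟩
  · rintro ⟨m, n, rfl⟩
    exact ⟨_, ⟨m, n, rfl⟩, by simp only [map_add, map_smul]⟩

theorem bijOn_intLattice {f : E →ₗ[K] F} (hf : Function.Injective f) (u v : E) :
    Set.BijOn f (intLattice K u v) (intLattice K (f u) (f v)) :=
  (image_intLattice f u v) ▸ hf.injOn.bijOn_image

end IntLattice

section PlaneRotation

noncomputable def planeRotation (θ : ℝ) : (ℝ × ℝ) →ₗ[ℝ] ℝ × ℝ where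
  toFun p := (cos θ * p.1 - sin θ * p.2, sin θ * p.1 + cos θ * p.2)
  map_add' p q := by ext <;> simp only [Prod.fst_add, Prod.snd_add] <;> ring
  map_smul' c p := by ext <;> simp only [Prod.smul_fst, Prod.smul_snd, smul_eq_mul,
    RingHom.id_apply] <;> ring

theorem planeRotation_apply (θ : ℝ) (p : ℝ × ℝ) :
    planeRotation θ p = (cos θ * p.1 - sin θ * p.2, sin θ * p.1 + cos θ * p.2) := rfl

theorem planeRotation_neg_apply_planeRotation (θ : ℝ) (p : ℝ × ℝ) :
    planeRotation (-θ) (planeRotation θ p) = p := by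
  simp only [planeRotation_apply, cos_neg, sin_neg]
  ext
  · linear_combination p.1 * sin_sq_add_cos_sq θ
  · linear_combination p.2 * sin_sq_add_cos_sq θ

theorem planeRotation_injective (θ : ℝ) : Function.Injective (planeRotation θ) :=
  Function.LeftInverse.injective (planeRotation_neg_apply_planeRotation θ)

theorem planeRotation_pi_div_six_apply (p : ℝ × ℝ) :
    planeRotation (π / 6) p = (√3 / 2 * p.1 - p.2 / 2, p.1 / 2 + √3 / 2 * p.2) := by
  rw [planeRotation_apply, cos_pi_div_six, sin_pi_div_six]
  ext <;> ring

end PlaneRotation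

theorem stmt15_general (D : ℝ)
    (R : ℝ × ℝ → ℝ × ℝ)
    (hR : ∀ p : ℝ × ℝ, R p = (Real.cos (π / 6) * p.1 - Real.sin (π / 6) * p.2,
                              Real.sin (π / 6) * p.1 + Real.cos (π / 6) * p.2))
    (L1 L2 : Set (ℝ × ℝ))
    (hL1 : L1 = {p | ∃ m n : ℤ, p = (m : ℝ) • ((Real.sqrt 3 * D, 0) : ℝ × ℝ) +
      (n : ℝ) • ((Real.sqrt 3 / 2 * D, 3 / 2 * D) : ℝ × ℝ)})
    (hL2 : L2 = {p | ∃ m n : ℤ, p = (m : ℝ) • ((3 / 2 * D, Real.sqrt 3 / 2 * D) : ℝ × ℝ) +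
      (n : ℝ) • ((0, Real.sqrt 3 * D) : ℝ × ℝ)}) :
    Set.BijOn R L1 L2 := by
  have hRot : R = planeRotation (π / 6) := funext hR
  have h3 : √3 * √3 = 3 := mul_self_sqrt (by norm_num)
  have hu : planeRotation (π / 6) (√3 * D, 0) = (3 / 2 * D, √3 / 2 * D) := by
    rw [planeRotation_pi_div_six_apply]
    ext
    · linear_combination D / 2 * h3
    · ring
  have hv : planeRotation (π / 6) (√3 / 2 * D, 3 / 2 * D) = (0, √3 * D) := by
    rw [planeRotation_pi_div_six_apply]
    ext
    · linear_combination D / 4 * h3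
    · ring
  subst hRot hL1 hL2
  have h := bijOn_intLattice (planeRotation_injective (π / 6))
    ((√3 * D, 0) : ℝ × ℝ) (√3 / 2 * D, 3 / 2 * D)
  rwa [hu, hv] at h

/-- The rotation `R` of the plane by `π/6` maps the triangular lattice `L_t(√3·D)`
(ℤ-span of `(√3·D, 0)` and `((√3/2)·D, (3/2)·D)`) bijectively onto the lattice `L_T(D)`
(ℤ-span of `((3/2)·D, (√3/2)·D)` and `(0, √3·D)`): `L_T(D) = L_t(√3·D)` up to a
rotation, so the hexagonal mesh with waveguide length `D` does not perform better than
a triangular mesh whose waveguides are `√3` times longer. -/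
theorem stmt15 (D : ℝ) (hD : 0 < D)
    (R : ℝ × ℝ → ℝ × ℝ)
    (hR : ∀ p : ℝ × ℝ, R p = (Real.cos (π / 6) * p.1 - Real.sin (π / 6) * p.2,
                              Real.sin (π / 6) * p.1 + Real.cos (π / 6) * p.2))
    (L1 L2 : Set (ℝ × ℝ))
    (hL1 : L1 = {p | ∃ m n : ℤ, p = (m : ℝ) • ((Real.sqrt 3 * D, 0) : ℝ × ℝ) +
      (n : ℝ) • ((Real.sqrt 3 / 2 * D, 3 / 2 * D) : ℝ × ℝ)})
    (hL2 : L2 = {p | ∃ m n : ℤ, p = (m : ℝ) • ((3 / 2 * D, Real.sqrt 3 / 2 * D) : ℝ × ℝ) +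
      (n : ℝ) • ((0, Real.sqrt 3 * D) : ℝ × ℝ)}) :
    Set.BijOn R L1 L2 :=
  stmt15_general D R hR L1 L2 hL1 hL2
end

section
/- For all real numbers a, b with 0 ≤ a ≤ π/2 and 0 ≤ b ≤ π/2, one has arccos((cos a + cos b)/2) ≤ √((a² + b²)/2). Equivalently, for the square waveguide mesh with waveguide length D > 0, the dispersion ratio k_s(ξ_x, ξ_y) = (1/(2πD·√(ξ_x²+ξ_y²)))·arccos(b_s(ξ_x,ξ_y)/2), with b_s(ξ_x,ξ_y) = cos(2πDξ_x) + cos(2πDξ_y), satisfies k_s(ξ_x, ξ_y) ≤ 1/√2 for all 0 ≤ ξ_x, ξ_y ≤ 1/(4D) with (ξ_x, ξ_y) ≠ (0, 0): the propagation speed on the mesh is maximal at dc and decreases for increasing spatial frequencies. -/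
open Real Set

/-!
Since `sin` is concave on `[0, π]` and vanishes at `0`, `sin x / x` decreases there; hence the
derivative `-(sin √t / √t) / 2` of `t ↦ cos √t` increases on `(0, π²)`, and `t ↦ cos √t` is convex
on `[0, π²]`. Jensen's inequality at `a²` and `b²` gives `cos √((a² + b²)/2) ≤ (cos a + cos b)/2`,
and applying the decreasing function `arccos` yields the first claim. The dispersion bound is the
first claim for `a = 2πDξ_x`, `b = 2πDξ_y`, since then `√((a² + b²)/2) = 2πD√(ξ_x² + ξ_y²)/√2`.
-/

theorem antitoneOn_sin_div : AntitoneOn (fun x => sin x / x) (Ioc 0 π) := by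
  intro x hx y hy hxy
  have h := strictConcaveOn_sin_Icc.concaveOn.neg.secant_mono (a := 0) ⟨le_rfl, pi_pos.le⟩
    (Ioc_subset_Icc_self hx) (Ioc_subset_Icc_self hy) hx.1.ne' hy.1.ne' hxy
  simp only [Pi.neg_apply, sin_zero, neg_zero, sub_zero, neg_div] at h
  exact neg_le_neg_iff.mp h

theorem hasDerivAt_cos_sqrt {t : ℝ} (ht : 0 < t) :
    HasDerivAt (fun t => cos √t) (-(sin √t / √t) / 2) t := by
  convert (hasDerivAt_sqrt ht.ne').cos using 1
  field_simp

theorem convexOn_cos_sqrt : ConvexOn ℝ (Icc 0 (π ^ 2)) (fun t => cos √t) := by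
  refine MonotoneOn.convexOn_of_deriv (convex_Icc _ _) (by fun_prop) ?_ ?_ <;>
    rw [interior_Icc]
  · exact fun t ht => (hasDerivAt_cos_sqrt ht.1).differentiableAt.differentiableWithinAt
  · intro s hs t ht hst
    have hsqrt_mem {u : ℝ} (hu : u ∈ Ioo 0 (π ^ 2)) : √u ∈ Ioc 0 π :=
      ⟨sqrt_pos.2 hu.1, sqrt_le_left pi_pos.le |>.2 hu.2.le⟩
    rw [(hasDerivAt_cos_sqrt hs.1).deriv, (hasDerivAt_cos_sqrt ht.1).deriv]
    have := antitoneOn_sin_div (hsqrt_mem hs) (hsqrt_mem ht) (sqrt_le_sqrt hst)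
    linarith

theorem cos_sqrt_sq_add_sq_div_two_le {a b : ℝ} (ha : |a| ≤ π) (hb : |b| ≤ π) :
    cos √((a ^ 2 + b ^ 2) / 2) ≤ (cos a + cos b) / 2 := by
  have hmem {x : ℝ} (hx : |x| ≤ π) : x ^ 2 ∈ Icc 0 (π ^ 2) :=
    ⟨sq_nonneg x, sq_le_sq' (abs_le.1 hx).1 (abs_le.1 hx).2⟩
  have h := convexOn_cos_sqrt.2 (hmem ha) (hmem hb) (by norm_num : (0 : ℝ) ≤ 1 / 2)
    (by norm_num : (0 : ℝ) ≤ 1 / 2) (by norm_num)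
  simp only [smul_eq_mul, sqrt_sq_eq_abs, cos_abs] at h
  rw [show (a ^ 2 + b ^ 2) / 2 = 1 / 2 * a ^ 2 + 1 / 2 * b ^ 2 by ring]
  linarith

theorem arccos_cos_add_cos_div_two_le {a b : ℝ} (ha : |a| ≤ π) (hb : |b| ≤ π) :
    arccos ((cos a + cos b) / 2) ≤ √((a ^ 2 + b ^ 2) / 2) := by
  have hle : √((a ^ 2 + b ^ 2) / 2) ≤ π := by
    rw [sqrt_le_left pi_pos.le]
    linarith [sq_le_sq' (abs_le.1 ha).1 (abs_le.1 ha).2, sq_le_sq' (abs_le.1 hb).1 (abs_le.1 hb).2]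
  calc arccos ((cos a + cos b) / 2)
      ≤ arccos (cos √((a ^ 2 + b ^ 2) / 2)) :=
        arccos_le_arccos (cos_sqrt_sq_add_sq_div_two_le ha hb)
    _ = √((a ^ 2 + b ^ 2) / 2) := arccos_cos (sqrt_nonneg _) hle

/-- For `a, b ∈ [0, π/2]` one has `arccos((cos a + cos b)/2) ≤ √((a² + b²)/2)`;
equivalently, the dispersion ratio of the square waveguide mesh,
`k_s(ξ_x, ξ_y) = arccos(b_s/2)/(2πD·√(ξ_x²+ξ_y²))` with
`b_s = cos(2πDξ_x) + cos(2πDξ_y)`, satisfies `k_s ≤ 1/√2` for all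
`0 ≤ ξ_x, ξ_y ≤ 1/(4D)` with `(ξ_x, ξ_y) ≠ (0, 0)`: the propagation speed is maximal
at dc. -/
theorem stmt17 :
    (∀ a b : ℝ, 0 ≤ a → a ≤ π / 2 → 0 ≤ b → b ≤ π / 2 →
      Real.arccos ((Real.cos a + Real.cos b) / 2) ≤ Real.sqrt ((a ^ 2 + b ^ 2) / 2)) ∧
    (∀ D ξx ξy : ℝ, 0 < D → 0 ≤ ξx → ξx ≤ 1 / (4 * D) → 0 ≤ ξy → ξy ≤ 1 / (4 * D) →
      (ξx, ξy) ≠ (0, 0) →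
      (1 / (2 * π * D * Real.sqrt (ξx ^ 2 + ξy ^ 2))) *
        Real.arccos ((Real.cos (2 * π * D * ξx) + Real.cos (2 * π * D * ξy)) / 2) ≤
        1 / Real.sqrt 2) := by
  have abs_le_pi {x : ℝ} (h0 : 0 ≤ x) (h1 : x ≤ π / 2) : |x| ≤ π :=
    abs_le.2 ⟨by linarith [pi_pos], by linarith [pi_pos]⟩
  refine ⟨fun a b ha0 ha hb0 hb =>
    arccos_cos_add_cos_div_two_le (abs_le_pi ha0 ha) (abs_le_pi hb0 hb), ?_⟩
  intro D ξx ξy hD hx0 hx1 hy0 hy1 hne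
  set c := 2 * π * D
  have hc : 0 < c := by positivity
  have hξ : 0 < ξx ^ 2 + ξy ^ 2 := by
    rw [Ne, Prod.mk.injEq, not_and_or] at hne
    rcases hne with h | h <;> positivity
  have hbound {ξ : ℝ} (h0 : 0 ≤ ξ) (h1 : ξ ≤ 1 / (4 * D)) : c * ξ ≤ π / 2 := by
    rw [le_div_iff₀ (by positivity)] at h1
    nlinarith [pi_pos]
  have hsqrt : √(((c * ξx) ^ 2 + (c * ξy) ^ 2) / 2) = c * √(ξx ^ 2 + ξy ^ 2) / √2 := by
    rw [show ((c * ξx) ^ 2 + (c * ξy) ^ 2) / 2 = c ^ 2 * (ξx ^ 2 + ξy ^ 2) / 2 by ring,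
      sqrt_div' _ zero_le_two, sqrt_mul' _ hξ.le, sqrt_sq hc.le]
  calc 1 / (c * √(ξx ^ 2 + ξy ^ 2)) * arccos ((cos (c * ξx) + cos (c * ξy)) / 2)
      ≤ 1 / (c * √(ξx ^ 2 + ξy ^ 2)) * √(((c * ξx) ^ 2 + (c * ξy) ^ 2) / 2) := by
        gcongr
        exact arccos_cos_add_cos_div_two_le (abs_le_pi (by positivity) (hbound hx0 hx1))
          (abs_le_pi (by positivity) (hbound hy0 hy1))
    _ = 1 / √2 := by
        rw [hsqrt]
        field_simp [(sqrt_pos.2 hξ).ne']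
end
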